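/- Let G be a simple undirected graph on {1,…,n} with edge set E and degrees d_i, let S ⊆ {1,…,n} be nonempty, and let A be the associated alignment matrix. Let Δ ∈ (0,1), v ∈ ℝⁿ, μ ∈ ℝ, let b ∈ ℝⁿ be given by b_i = μ/4 for i ∈ S and b_i = 0 otherwise, and let r and c be independent mean-zero random vectors in ℝⁿ with r_i = 0 almost surely for i ∉ S, E[r_i²] ≤ σ²/16 for i ∈ S, and E[c_i²] ≤ (σ′)²/16 for all i. Define v′ = (1 − Δ)v + Δ(Av + b + r + c). Then E‖v′ − μ𝟙‖₂² ≤ (1 − (Δ/8) κ(G)) ‖v − μ𝟙‖₂² + (Δ²/16)( |S| σ² + n (σ′)² ), where κ(G) is the sieve constant of G and 𝟙 ∈ ℝⁿ is the all-ones vector. -/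

import Mathlib

/-!
Put `x = v - μ𝟙` and let `M = diag(𝟙_S) + L`, where `L` is the Laplacian of the edge weights
`1 / max(d_k, d_l)`. The alignment matrix is `A = 1 - M / 4`, and `M𝟙 = 𝟙_S` gives
`A(μ𝟙) + b = μ𝟙`, so `v' - μ𝟙 = (x - (Δ/4) M x) + Δ (r + c)`.

The quadratic form of `M` is `∑_{i ∈ S} x_i² + ∑_{{k,l} ∈ E} (x_k - x_l)² / max(d_k, d_l)`. It is
at least `κ ‖x‖²` (drop all of `S` but one vertex and rescale `x` to a unit vector) and at most
`3 ‖x‖²` (the weights in each row sum to at most `1`). For a symmetric `M` with `0 ≤ M ≤ 3` one has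
`‖Mx‖² ≤ 3 ⟨x, Mx⟩`, so the gradient step of size `Δ/4 ≤ 1/3` satisfies
`‖x - (Δ/4) M x‖² ≤ ‖x‖² - (Δ/4) ⟨x, Mx⟩ ≤ (1 - Δκ/8) ‖x‖²`.

The noise is centred and `r`, `c` are independent, so the cross terms vanish in expectation and the
noise adds `Δ² (E‖r‖² + E‖c‖²) ≤ Δ² (|S| σ² + n σ'²) / 16`.
-/

open Finset MeasureTheory ProbabilityTheory
open scoped Matrix

namespace Matrix

variable {ι : Type*} [Fintype ι]

theorem IsSymm.dotProduct_mulVec_comm {B : Matrix ι ι ℝ} (hB : B.IsSymm) (x y : ι → ℝ) :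
    x ⬝ᵥ B *ᵥ y = (B *ᵥ x) ⬝ᵥ y := by
  rw [dotProduct_mulVec, ← vecMul_transpose, hB.eq]

theorem IsSymm.mulVec_dotProduct_mulVec_le {B : Matrix ι ι ℝ} (hB : B.IsSymm) {L : ℝ}
    (hL : 0 < L) (hpos : ∀ y, 0 ≤ y ⬝ᵥ B *ᵥ y) (hle : ∀ y, y ⬝ᵥ B *ᵥ y ≤ L * (y ⬝ᵥ y))
    (x : ι → ℝ) : (B *ᵥ x) ⬝ᵥ (B *ᵥ x) ≤ L * (x ⬝ᵥ B *ᵥ x) := by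
  set u := B *ᵥ x
  -- positivity at `x - L⁻¹ • Bx`, with `⟨Bx, B(Bx)⟩ ≤ L ‖Bx‖²`
  have key := hpos (x - L⁻¹ • u)
  simp only [mulVec_sub, mulVec_smul, dotProduct_sub, sub_dotProduct, dotProduct_smul,
    smul_dotProduct, smul_eq_mul, hB.dotProduct_mulVec_comm x u] at key
  have hu := hle u
  have hLinv : 0 < L⁻¹ := inv_pos.mpr hL
  field_simp at key
  nlinarith [mul_le_mul_of_nonneg_left hu hLinv.le]

theorem IsSymm.dotProduct_sub_smul_mulVec_le {B : Matrix ι ι ℝ} (hB : B.IsSymm) {L Δ : ℝ}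
    (hL : 0 < L) (hpos : ∀ y, 0 ≤ y ⬝ᵥ B *ᵥ y) (hle : ∀ y, y ⬝ᵥ B *ᵥ y ≤ L * (y ⬝ᵥ y))
    (hΔ : 0 ≤ Δ) (hΔL : Δ * L ≤ 1) (x : ι → ℝ) :
    (x - Δ • B *ᵥ x) ⬝ᵥ (x - Δ • B *ᵥ x) ≤ x ⬝ᵥ x - Δ * (x ⬝ᵥ B *ᵥ x) := by
  have hBx := hB.mulVec_dotProduct_mulVec_le hL hpos hle x
  have hQ := hpos x
  simp only [dotProduct_sub, sub_dotProduct, dotProduct_smul, smul_dotProduct, smul_eq_mul,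
    dotProduct_comm (B *ᵥ x) x]
  nlinarith [mul_le_mul_of_nonneg_left hBx (sq_nonneg Δ),
    mul_nonneg (mul_nonneg hΔ hQ) (sub_nonneg.mpr hΔL)]

theorem IsSymm.sum_sum_mul_swap {W : Matrix ι ι ℝ} (hW : W.IsSymm) (f : ι → ι → ℝ) :
    ∑ i, ∑ j, W i j * f j i = ∑ i, ∑ j, W i j * f i j := by
  rw [Finset.sum_comm]
  simp_rw [hW.apply]

section Laplacian

variable [DecidableEq ι]

def weightedLaplacian (W : Matrix ι ι ℝ) : Matrix ι ι ℝ :=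
  diagonal (fun i => ∑ j, W i j) - W

theorem weightedLaplacian_mulVec_one (W : Matrix ι ι ℝ) : weightedLaplacian W *ᵥ 1 = 0 := by
  ext i
  rw [weightedLaplacian, sub_mulVec, Pi.sub_apply, mulVec_diagonal]
  simp [mulVec, dotProduct]

theorem isSymm_weightedLaplacian {W : Matrix ι ι ℝ} (hW : W.IsSymm) :
    (weightedLaplacian W).IsSymm :=
  (isSymm_diagonal _).sub hW

theorem IsSymm.dotProduct_weightedLaplacian_mulVec {W : Matrix ι ι ℝ} (hW : W.IsSymm)
    (x : ι → ℝ) :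
    x ⬝ᵥ weightedLaplacian W *ᵥ x = (1 / 2) * ∑ i, ∑ j, W i j * (x i - x j) ^ 2 := by
  have hform : x ⬝ᵥ weightedLaplacian W *ᵥ x = ∑ i, ∑ j, W i j * (x i * (x i - x j)) := by
    rw [weightedLaplacian, sub_mulVec, dotProduct_sub]
    simp only [dotProduct, mulVec_diagonal]
    simp only [mulVec, dotProduct, ← Finset.sum_sub_distrib, Finset.sum_mul, Finset.mul_sum]
    exact Finset.sum_congr rfl fun i _ => Finset.sum_congr rfl fun j _ => by ring
  have hsplit : ∀ i j, W i j * (x i - x j) ^ 2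
      = W i j * (x i * (x i - x j)) + W i j * (x j * (x j - x i)) := fun i j => by ring
  simp only [hform, hsplit, Finset.sum_add_distrib,
    hW.sum_sum_mul_swap (fun i j => x i * (x i - x j))]
  ring

theorem IsSymm.dotProduct_weightedLaplacian_mulVec_nonneg {W : Matrix ι ι ℝ} (hW : W.IsSymm)
    (hW0 : ∀ i j, 0 ≤ W i j) (x : ι → ℝ) : 0 ≤ x ⬝ᵥ weightedLaplacian W *ᵥ x := by
  rw [hW.dotProduct_weightedLaplacian_mulVec]
  exact mul_nonneg (by norm_num) <| sum_nonneg fun i _ => sum_nonneg fun j _ =>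
    mul_nonneg (hW0 i j) (sq_nonneg (x i - x j))

theorem IsSymm.dotProduct_weightedLaplacian_mulVec_le {W : Matrix ι ι ℝ} (hW : W.IsSymm)
    (hW0 : ∀ i j, 0 ≤ W i j) {ρ : ℝ} (hρ : ∀ i, ∑ j, W i j ≤ ρ) (x : ι → ℝ) :
    x ⬝ᵥ weightedLaplacian W *ᵥ x ≤ 2 * ρ * (x ⬝ᵥ x) := by
  rw [hW.dotProduct_weightedLaplacian_mulVec]
  calc (1 / 2) * ∑ i, ∑ j, W i j * (x i - x j) ^ 2
      ≤ (1 / 2) * ∑ i, ∑ j, (2 * (W i j * x i ^ 2) + 2 * (W i j * x j ^ 2)) := by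
        gcongr with i _ j _
        nlinarith [mul_nonneg (hW0 i j) (sq_nonneg (x i + x j))]
    _ = 2 * ∑ i, (∑ j, W i j) * x i ^ 2 := by
        simp only [Finset.sum_add_distrib, ← Finset.mul_sum, Finset.sum_mul,
          hW.sum_sum_mul_swap (fun i _ => x i ^ 2)]
        ring
    _ ≤ 2 * ∑ i, ρ * x i ^ 2 := by gcongr with i; exact hρ i
    _ = 2 * ρ * (x ⬝ᵥ x) := by simp only [dotProduct, Finset.mul_sum, sq]; ring_nf

end Laplacian

end Matrix

theorem mul_sum_sq_le_of_forall_sum_sq_eq_one {ι : Type*} [Fintype ι] {f : (ι → ℝ) → ℝ}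
    {κ : ℝ} (hf : ∀ (c : ℝ) x, f (c • x) = c ^ 2 * f x)
    (hκ : ∀ x, ∑ i, x i ^ 2 = 1 → κ ≤ f x) (x : ι → ℝ) : κ * ∑ i, x i ^ 2 ≤ f x := by
  obtain hs | hs := (sum_nonneg fun i _ => sq_nonneg (x i) : 0 ≤ ∑ i, x i ^ 2).eq_or_lt
  · have hx : x = (0 : ℝ) • x := by
      ext i
      simpa using
        (sum_eq_zero_iff_of_nonneg fun i _ => sq_nonneg (x i)).mp hs.symm i (mem_univ i)
    rw [← hs, hx, hf]
    simp
  · have hsqrt := Real.sq_sqrt hs.le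
    have hunit : ∑ i, ((√(∑ i, x i ^ 2))⁻¹ • x) i ^ 2 = 1 := by
      simp only [Pi.smul_apply, smul_eq_mul, mul_pow, ← mul_sum, inv_pow, hsqrt]
      exact inv_mul_cancel₀ hs.ne'
    have := hκ _ hunit
    rw [hf, inv_pow, hsqrt, inv_mul_eq_div, le_div_iff₀ hs] at this
    linarith

namespace SimpleGraph

variable {V : Type*} [Fintype V] (G : SimpleGraph V) [DecidableRel G.Adj]

noncomputable def sieveWeight : Matrix V V ℝ :=
  Matrix.of fun k l => if G.Adj k l then (((max (G.degree k) (G.degree l) : ℕ) : ℝ))⁻¹ else 0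

theorem isSymm_sieveWeight : G.sieveWeight.IsSymm :=
  Matrix.IsSymm.ext fun k l => by
    simp only [sieveWeight, Matrix.of_apply, G.adj_comm k l, max_comm]

theorem sieveWeight_nonneg (k l : V) : 0 ≤ G.sieveWeight k l := by
  simp only [sieveWeight, Matrix.of_apply]; split_ifs <;> positivity

theorem sum_sieveWeight (k : V) :
    ∑ l, G.sieveWeight k l
      = ∑ l ∈ G.neighborFinset k, (((max (G.degree k) (G.degree l) : ℕ) : ℝ))⁻¹ := by
  simp only [sieveWeight, Matrix.of_apply, G.neighborFinset_eq_filter, sum_filter]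

theorem sum_sieveWeight_le_one (k : V) : ∑ l, G.sieveWeight k l ≤ 1 := by
  have hle : ∀ l ∈ G.neighborFinset k,
      (((max (G.degree k) (G.degree l) : ℕ) : ℝ))⁻¹ ≤ ((G.degree k : ℕ) : ℝ)⁻¹ := by
    intro l hl
    have : 0 < G.degree k :=
      (G.degree_pos_iff_exists_adj k).mpr ⟨l, (G.mem_neighborFinset k l).mp hl⟩
    gcongr
    exact le_max_left _ _
  calc ∑ l, G.sieveWeight k l
      = ∑ l ∈ G.neighborFinset k, (((max (G.degree k) (G.degree l) : ℕ) : ℝ))⁻¹ :=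
        G.sum_sieveWeight k
    _ ≤ (G.neighborFinset k).card • ((G.degree k : ℕ) : ℝ)⁻¹ := sum_le_card_nsmul _ _ _ hle
    _ ≤ 1 := by
        rw [card_neighborFinset_eq_degree, nsmul_eq_mul]
        exact mul_inv_le_one

theorem sieveWeight_mul (k l : V) (a : ℝ) :
    G.sieveWeight k l * a
      = if G.Adj k l then a / ((max (G.degree k) (G.degree l) : ℕ) : ℝ) else 0 := by
  simp only [sieveWeight, Matrix.of_apply]
  split_ifs <;> ring

/-- The sieve constant `κ(G)` is the minimum of `sieveEnergy G m x` over vertices `m` and unit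
vectors `x`; each edge appears twice in the double sum. -/
noncomputable def sieveEnergy (m : V) (x : V → ℝ) : ℝ :=
  x m ^ 2 + (1 / 2) * ∑ k, ∑ l,
    if G.Adj k l then (x k - x l) ^ 2 / ((max (G.degree k) (G.degree l) : ℕ) : ℝ) else 0

theorem sieveEnergy_eq (m : V) (x : V → ℝ) :
    G.sieveEnergy m x
      = x m ^ 2 + (1 / 2) * ∑ k, ∑ l, G.sieveWeight k l * (x k - x l) ^ 2 := by
  simp only [sieveEnergy, sieveWeight_mul]

theorem sieveEnergy_smul (m : V) (c : ℝ) (x : V → ℝ) :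
    G.sieveEnergy m (c • x) = c ^ 2 * G.sieveEnergy m x := by
  have hterm : ∀ k l, G.sieveWeight k l * (c * x k - c * x l) ^ 2
      = c ^ 2 * (G.sieveWeight k l * (x k - x l) ^ 2) := fun k l => by ring
  simp only [sieveEnergy_eq, Pi.smul_apply, smul_eq_mul, hterm, ← mul_sum]
  ring

variable [DecidableEq V]

noncomputable def sieveLaplacian (S : Finset V) : Matrix V V ℝ :=
  Matrix.diagonal (fun i => if i ∈ S then 1 else 0) + Matrix.weightedLaplacian G.sieveWeight

variable {G} {S : Finset V}

theorem isSymm_sieveLaplacian : (G.sieveLaplacian S).IsSymm :=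
  (Matrix.isSymm_diagonal _).add (Matrix.isSymm_weightedLaplacian G.isSymm_sieveWeight)

theorem sieveLaplacian_mulVec_one :
    G.sieveLaplacian S *ᵥ 1 = fun i => if i ∈ S then 1 else 0 := by
  ext i
  simp [sieveLaplacian, Matrix.add_mulVec, Matrix.weightedLaplacian_mulVec_one,
    Matrix.mulVec_diagonal]

theorem dotProduct_sieveLaplacian_mulVec (x : V → ℝ) :
    x ⬝ᵥ G.sieveLaplacian S *ᵥ x
      = ∑ i ∈ S, x i ^ 2 + (1 / 2) * ∑ k, ∑ l, G.sieveWeight k l * (x k - x l) ^ 2 := by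
  rw [sieveLaplacian, Matrix.add_mulVec, dotProduct_add,
    G.isSymm_sieveWeight.dotProduct_weightedLaplacian_mulVec]
  simp [dotProduct, Matrix.mulVec_diagonal, sq]

theorem dotProduct_sieveLaplacian_mulVec_nonneg (x : V → ℝ) :
    0 ≤ x ⬝ᵥ G.sieveLaplacian S *ᵥ x := by
  rw [dotProduct_sieveLaplacian_mulVec]
  exact add_nonneg (sum_nonneg fun i _ => sq_nonneg (x i)) <| mul_nonneg (by norm_num) <|
    sum_nonneg fun k _ => sum_nonneg fun l _ => mul_nonneg (G.sieveWeight_nonneg k l) (sq_nonneg _)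

theorem dotProduct_sieveLaplacian_mulVec_le (x : V → ℝ) :
    x ⬝ᵥ G.sieveLaplacian S *ᵥ x ≤ 3 * (x ⬝ᵥ x) := by
  have hdiag : ∑ i ∈ S, x i ^ 2 ≤ x ⬝ᵥ x := by
    simpa [dotProduct, ← sq] using sum_le_sum_of_subset_of_nonneg (subset_univ S)
      fun i _ _ => sq_nonneg (x i)
  have hlap := G.isSymm_sieveWeight.dotProduct_weightedLaplacian_mulVec_le G.sieveWeight_nonneg
    G.sum_sieveWeight_le_one x
  rw [G.isSymm_sieveWeight.dotProduct_weightedLaplacian_mulVec] at hlap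
  rw [dotProduct_sieveLaplacian_mulVec]
  linarith

theorem sieveEnergy_le_dotProduct_sieveLaplacian_mulVec {m : V} (hm : m ∈ S) (x : V → ℝ) :
    G.sieveEnergy m x ≤ x ⬝ᵥ G.sieveLaplacian S *ᵥ x := by
  rw [sieveEnergy_eq, dotProduct_sieveLaplacian_mulVec]
  gcongr
  exact single_le_sum (fun i _ => sq_nonneg (x i)) hm

theorem mul_dotProduct_le_dotProduct_sieveLaplacian_mulVec (hS : S.Nonempty) {κ : ℝ}
    (hκ : ∀ m x, ∑ i, x i ^ 2 = 1 → κ ≤ G.sieveEnergy m x) (x : V → ℝ) :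
    κ * (x ⬝ᵥ x) ≤ x ⬝ᵥ G.sieveLaplacian S *ᵥ x := by
  obtain ⟨m, hm⟩ := hS
  calc κ * (x ⬝ᵥ x) = κ * ∑ i, x i ^ 2 := by simp [dotProduct, sq]
    _ ≤ G.sieveEnergy m x :=
        mul_sum_sq_le_of_forall_sum_sq_eq_one (G.sieveEnergy_smul m) (hκ m) x
    _ ≤ x ⬝ᵥ G.sieveLaplacian S *ᵥ x := sieveEnergy_le_dotProduct_sieveLaplacian_mulVec hm x

theorem dotProduct_sub_smul_sieveLaplacian_mulVec_le (hS : S.Nonempty) {κ : ℝ}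
    (hκ : ∀ m x, ∑ i, x i ^ 2 = 1 → κ ≤ G.sieveEnergy m x) {Δ : ℝ} (hΔ0 : 0 ≤ Δ)
    (hΔ1 : Δ ≤ 4 / 3) (x : V → ℝ) :
    (x - (Δ / 4) • G.sieveLaplacian S *ᵥ x) ⬝ᵥ (x - (Δ / 4) • G.sieveLaplacian S *ᵥ x)
      ≤ (1 - Δ / 8 * κ) * (x ⬝ᵥ x) := by
  have hstep := (isSymm_sieveLaplacian (G := G) (S := S)).dotProduct_sub_smul_mulVec_le
    (by norm_num : (0 : ℝ) < 3) dotProduct_sieveLaplacian_mulVec_nonneg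
    dotProduct_sieveLaplacian_mulVec_le (by positivity : 0 ≤ Δ / 4) (by linarith) x
  have hκx := mul_dotProduct_le_dotProduct_sieveLaplacian_mulVec hS hκ x
  nlinarith [dotProduct_sieveLaplacian_mulVec_nonneg (G := G) (S := S) x]

theorem eq_one_sub_smul_sieveLaplacian {A : Matrix V V ℝ}
    (hAadj : ∀ i j, G.Adj i j →
      A i j = 1 / (4 * ((max (G.degree i) (G.degree j) : ℕ) : ℝ)))
    (hAoff : ∀ i j, i ≠ j → ¬ G.Adj i j → A i j = 0)
    (hAdiagOut : ∀ i ∉ S, A i i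
      = 1 - ∑ j ∈ G.neighborFinset i, 1 / (4 * ((max (G.degree i) (G.degree j) : ℕ) : ℝ)))
    (hAdiagIn : ∀ i ∈ S, A i i
      = 3 / 4 - ∑ j ∈ G.neighborFinset i, 1 / (4 * ((max (G.degree i) (G.degree j) : ℕ) : ℝ))) :
    A = 1 - (1 / 4 : ℝ) • G.sieveLaplacian S := by
  have hrow : ∀ i, ∑ j ∈ G.neighborFinset i, 1 / (4 * ((max (G.degree i) (G.degree j) : ℕ) : ℝ))
      = 1 / 4 * ∑ j, G.sieveWeight i j := fun i => by
    rw [sum_sieveWeight, mul_sum]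
    exact sum_congr rfl fun j _ => by rw [one_div, mul_inv]; ring
  ext i j
  obtain rfl | hij := eq_or_ne i j
  · have hWii : G.sieveWeight i i = 0 := by simp [sieveWeight]
    simp only [sieveLaplacian, Matrix.weightedLaplacian, Matrix.sub_apply, Matrix.add_apply,
      Matrix.smul_apply, Matrix.one_apply_eq, Matrix.diagonal_apply_eq, hWii, smul_eq_mul]
    by_cases hi : i ∈ S
    · rw [hAdiagIn i hi, hrow, if_pos hi]; ring
    · rw [hAdiagOut i hi, hrow, if_neg hi]; ring
  · simp only [sieveLaplacian, Matrix.weightedLaplacian, Matrix.sub_apply, Matrix.add_apply,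
      Matrix.smul_apply, Matrix.one_apply_ne hij, Matrix.diagonal_apply_ne _ hij, smul_eq_mul,
      sieveWeight, Matrix.of_apply]
    by_cases hadj : G.Adj i j
    · rw [hAadj i j hadj, if_pos hadj, one_div, mul_inv]; ring
    · rw [hAoff i j hij hadj, if_neg hadj]; ring

end SimpleGraph

namespace ProbabilityTheory

variable {Ω : Type*} [MeasurableSpace Ω] {μ : Measure Ω}

theorem IndepFun.integral_sq_const_add_add [IsProbabilityMeasure μ] {X Y : Ω → ℝ}
    (hXY : IndepFun X Y μ) (hX : MemLp X 2 μ) (hY : MemLp Y 2 μ) (hX0 : μ[X] = 0)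
    (hY0 : μ[Y] = 0) (a : ℝ) :
    ∫ ω, (a + (X ω + Y ω)) ^ 2 ∂μ = a ^ 2 + ∫ ω, X ω ^ 2 ∂μ + ∫ ω, Y ω ^ 2 ∂μ := by
  have hZ : MemLp (fun ω => a + (X ω + Y ω)) 2 μ := (memLp_const a).add (hX.add hY)
  have hmean : ∫ ω, a + (X ω + Y ω) ∂μ = a := by
    have hXi := hX.integrable one_le_two
    have hYi := hY.integrable one_le_two
    rw [integral_add (integrable_const a) (g := fun ω => X ω + Y ω) (hXi.add hYi),
      integral_add hXi hYi, hX0, hY0]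
    simp
  have hvar := variance_eq_sub hZ
  rw [variance_const_add (X := fun ω => X ω + Y ω) (hX.add hY).aestronglyMeasurable,
    hXY.variance_fun_add hX hY,
    variance_of_integral_eq_zero hX.aemeasurable hX0,
    variance_of_integral_eq_zero hY.aemeasurable hY0, hmean] at hvar
  simp only [Pi.pow_apply] at hvar
  linarith

theorem IndepFun.integral_sum_sq_add_mul_add {ι : Type*} [Fintype ι] [IsProbabilityMeasure μ]
    {r c : Ω → ι → ℝ} (hrc : IndepFun r c μ) (hr : ∀ i, MemLp (fun ω => r ω i) 2 μ)
    (hc : ∀ i, MemLp (fun ω => c ω i) 2 μ) (hr0 : ∀ i, ∫ ω, r ω i ∂μ = 0)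
    (hc0 : ∀ i, ∫ ω, c ω i ∂μ = 0) (y : ι → ℝ) (Δ : ℝ) :
    ∫ ω, ∑ i, (y i + (Δ * r ω i + Δ * c ω i)) ^ 2 ∂μ
      = y ⬝ᵥ y + Δ ^ 2 * (∑ i, ∫ ω, r ω i ^ 2 ∂μ + ∑ i, ∫ ω, c ω i ^ 2 ∂μ) := by
  have hcoord : ∀ i, ∫ ω, (y i + (Δ * r ω i + Δ * c ω i)) ^ 2 ∂μ
      = y i * y i + (Δ ^ 2 * ∫ ω, r ω i ^ 2 ∂μ + Δ ^ 2 * ∫ ω, c ω i ^ 2 ∂μ) := fun i => by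
    have hind : IndepFun (fun ω => Δ * r ω i) (fun ω => Δ * c ω i) μ :=
      hrc.comp (φ := fun v : ι → ℝ => Δ * v i) (ψ := fun v : ι → ℝ => Δ * v i)
        (by fun_prop) (by fun_prop)
    have hi := hind.integral_sq_const_add_add ((hr i).const_mul Δ) ((hc i).const_mul Δ)
      (by rw [integral_const_mul, hr0, mul_zero]) (by rw [integral_const_mul, hc0, mul_zero]) (y i)
    simp only [mul_pow, integral_const_mul] at hi
    rw [hi]
    ring
  rw [integral_finsetSum univ (f := fun i ω => (y i + (Δ * r ω i + Δ * c ω i)) ^ 2) fun i _ =>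
    ((memLp_const (y i)).add (((hr i).const_mul Δ).add ((hc i).const_mul Δ))).integrable_sq]
  simp only [hcoord, sum_add_distrib, ← mul_sum, dotProduct, mul_add]

end ProbabilityTheory

theorem sum_integral_sq_le_card_mul {Ω ι : Type*} [MeasurableSpace Ω] [Fintype ι]
    {μ : Measure Ω} {r : Ω → ι → ℝ} {S : Finset ι} {s : ℝ}
    (hzero : ∀ i ∉ S, ∀ᵐ ω ∂μ, r ω i = 0) (hS : ∀ i ∈ S, ∫ ω, r ω i ^ 2 ∂μ ≤ s) :
    ∑ i, ∫ ω, r ω i ^ 2 ∂μ ≤ #S * s := by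
  rw [← sum_subset (subset_univ S) fun i _ hi =>
    integral_eq_zero_of_ae ((hzero i hi).mono fun ω h => by simp [h])]
  simpa using sum_le_card_nsmul S _ s hS

theorem stmt15_general {Ω : Type*} [MeasureSpace Ω] [IsProbabilityMeasure (ℙ : Measure Ω)]
    (n : ℕ) (G : SimpleGraph (Fin n)) [DecidableRel G.Adj]
    (S : Finset (Fin n)) (hS : S.Nonempty) (A : Matrix (Fin n) (Fin n) ℝ)
    (hAadj : ∀ i j, G.Adj i j →
      A i j = 1 / (4 * ((max (G.degree i) (G.degree j) : ℕ) : ℝ)))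
    (hAoff : ∀ i j, i ≠ j → ¬ G.Adj i j → A i j = 0)
    (hAdiagOut : ∀ i ∉ S, A i i
      = 1 - ∑ j ∈ G.neighborFinset i, 1 / (4 * ((max (G.degree i) (G.degree j) : ℕ) : ℝ)))
    (hAdiagIn : ∀ i ∈ S, A i i
      = 3 / 4 - ∑ j ∈ G.neighborFinset i, 1 / (4 * ((max (G.degree i) (G.degree j) : ℕ) : ℝ)))
    (κ : ℝ)
    (hκ : IsLeast {y : ℝ | ∃ (m : Fin n) (x : Fin n → ℝ), (∑ i, (x i) ^ 2 = 1) ∧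
      y = (x m) ^ 2 + (1 / 2) * ∑ k, ∑ l,
        if G.Adj k l then (x k - x l) ^ 2 / ((max (G.degree k) (G.degree l) : ℕ) : ℝ) else 0} κ)
    (Δ : ℝ) (hΔ0 : 0 < Δ) (hΔ1 : Δ < 1) (v : Fin n → ℝ) (μ σ σ' : ℝ)
    (b : Fin n → ℝ) (hb : ∀ i, b i = if i ∈ S then μ / 4 else 0)
    (r c : Ω → Fin n → ℝ)
    (hIndep : IndepFun r c ℙ)
    (hrL2 : ∀ i, MemLp (fun ω => r ω i) 2 ℙ)
    (hcL2 : ∀ i, MemLp (fun ω => c ω i) 2 ℙ)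
    (hrMean : ∀ i, ∫ ω, r ω i ∂ℙ = 0) (hcMean : ∀ i, ∫ ω, c ω i ∂ℙ = 0)
    (hrZero : ∀ i ∉ S, ∀ᵐ ω ∂ℙ, r ω i = 0)
    (hrVar : ∀ i ∈ S, ∫ ω, (r ω i) ^ 2 ∂ℙ ≤ σ ^ 2 / 16)
    (hcVar : ∀ i, ∫ ω, (c ω i) ^ 2 ∂ℙ ≤ σ' ^ 2 / 16) :
    (∫ ω, ∑ i, (((1 - Δ) • v + Δ • (A.mulVec v + b + r ω + c ω)) i - μ) ^ 2 ∂ℙ)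
      ≤ (1 - (Δ / 8) * κ) * ∑ i, (v i - μ) ^ 2
        + (Δ ^ 2 / 16) * (S.card * σ ^ 2 + n * σ' ^ 2) := by
  have hA := G.eq_one_sub_smul_sieveLaplacian hAadj hAoff hAdiagOut hAdiagIn
  set x : Fin n → ℝ := v - μ • 1 with hx
  have hupdate : ∀ ω i, ((1 - Δ) • v + Δ • (A.mulVec v + b + r ω + c ω)) i - μ
      = (x - (Δ / 4) • G.sieveLaplacian S *ᵥ x) i + (Δ * r ω i + Δ * c ω i) := by
    intro ω i
    simp only [hA, hx, hb, Matrix.sub_mulVec, Matrix.one_mulVec, Matrix.smul_mulVec,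
      Matrix.mulVec_sub, Matrix.mulVec_smul, SimpleGraph.sieveLaplacian_mulVec_one, Pi.add_apply,
      Pi.sub_apply, Pi.smul_apply, smul_eq_mul, Pi.one_apply]
    split_ifs <;> ring
  simp only [hupdate]
  rw [hIndep.integral_sum_sq_add_mul_add hrL2 hcL2 hrMean hcMean]
  have hstep := SimpleGraph.dotProduct_sub_smul_sieveLaplacian_mulVec_le hS
    (fun m y hy => hκ.2 ⟨m, y, hy, rfl⟩) hΔ0.le (by linarith) x
  have hx2 : x ⬝ᵥ x = ∑ i, (v i - μ) ^ 2 := by simp [hx, dotProduct, sq]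
  have hr := sum_integral_sq_le_card_mul hrZero hrVar
  have hc := sum_integral_sq_le_card_mul (S := univ) (by simp) fun i _ => hcVar i
  rw [card_univ, Fintype.card_fin] at hc
  rw [hx2] at hstep
  linarith [mul_le_mul_of_nonneg_left (add_le_add hr hc) (sq_nonneg Δ)]

/-- one-step contraction in terms of the sieve constant `κ(G)` of
the graph, when the measurement set `S` is nonempty.  `κ(G)` is the minimum over
vertices `m` and unit vectors `x` of
`x_m² + Σ_{{k,l}∈E} (x_k - x_l)²/max(d_k,d_l)` (each unordered edge counted once,
written as half the sum over ordered adjacent pairs); it is encoded by the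
hypothesis `IsLeast … κ`. -/
theorem stmt15 {Ω : Type*} [MeasureSpace Ω] [IsProbabilityMeasure (ℙ : Measure Ω)]
    (n : ℕ) (G : SimpleGraph (Fin n)) [DecidableRel G.Adj]
    (S : Finset (Fin n)) (hS : S.Nonempty) (A : Matrix (Fin n) (Fin n) ℝ)
    (hAadj : ∀ i j, G.Adj i j →
      A i j = 1 / (4 * ((max (G.degree i) (G.degree j) : ℕ) : ℝ)))
    (hAoff : ∀ i j, i ≠ j → ¬ G.Adj i j → A i j = 0)
    (hAdiagOut : ∀ i ∉ S, A i i
      = 1 - ∑ j ∈ G.neighborFinset i, 1 / (4 * ((max (G.degree i) (G.degree j) : ℕ) : ℝ)))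
    (hAdiagIn : ∀ i ∈ S, A i i
      = 3 / 4 - ∑ j ∈ G.neighborFinset i, 1 / (4 * ((max (G.degree i) (G.degree j) : ℕ) : ℝ)))
    (κ : ℝ)
    (hκ : IsLeast {y : ℝ | ∃ (m : Fin n) (x : Fin n → ℝ), (∑ i, (x i) ^ 2 = 1) ∧
      y = (x m) ^ 2 + (1 / 2) * ∑ k, ∑ l,
        if G.Adj k l then (x k - x l) ^ 2 / ((max (G.degree k) (G.degree l) : ℕ) : ℝ) else 0} κ)
    (Δ : ℝ) (hΔ0 : 0 < Δ) (hΔ1 : Δ < 1) (v : Fin n → ℝ) (μ σ σ' : ℝ)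
    (hσ : 0 ≤ σ) (hσ' : 0 ≤ σ')
    (b : Fin n → ℝ) (hb : ∀ i, b i = if i ∈ S then μ / 4 else 0)
    (r c : Ω → Fin n → ℝ) (hrMeas : Measurable r) (hcMeas : Measurable c)
    (hIndep : IndepFun r c ℙ)
    (hrL2 : ∀ i, MemLp (fun ω => r ω i) 2 ℙ)
    (hcL2 : ∀ i, MemLp (fun ω => c ω i) 2 ℙ)
    (hrMean : ∀ i, ∫ ω, r ω i ∂ℙ = 0) (hcMean : ∀ i, ∫ ω, c ω i ∂ℙ = 0)
    (hrZero : ∀ i ∉ S, ∀ᵐ ω ∂ℙ, r ω i = 0)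
    (hrVar : ∀ i ∈ S, ∫ ω, (r ω i) ^ 2 ∂ℙ ≤ σ ^ 2 / 16)
    (hcVar : ∀ i, ∫ ω, (c ω i) ^ 2 ∂ℙ ≤ σ' ^ 2 / 16) :
    (∫ ω, ∑ i, (((1 - Δ) • v + Δ • (A.mulVec v + b + r ω + c ω)) i - μ) ^ 2 ∂ℙ)
      ≤ (1 - (Δ / 8) * κ) * ∑ i, (v i - μ) ^ 2
        + (Δ ^ 2 / 16) * (S.card * σ ^ 2 + n * σ' ^ 2) :=
  stmt15_general n G S hS A hAadj hAoff hAdiagOut hAdiagIn κ hκ Δ hΔ0 hΔ1 v μ σ σ' b hb r c hIndep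
    hrL2 hcL2 hrMean hcMean hrZero hrVar hcVar
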